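/- Let u ∈ H¹((0,1)×(0,∞)) be 1-periodic in y₁ with ∫₀¹ u(y₁, y₂) dy₁ = 0 for a.e. y₂ ≥ 0 and ∇u ∈ L²((0,1)×(0,∞)). If -Δu = 0 in (0,1)×(0,∞) (weakly), then |u(y₁, y₂)| ≤ C e^{-2π y₂} for all y₂ ≥ 1, for some constant C depending on u. -/

import Mathlib

open MeasureTheory Set Real Filter Topology

/-!
The Fourier coefficients `c n t = ∫₀¹ e^{-2πinx} u(x,t) dx` of the horizontal slices satisfy
`c'' = (2πn)² c` for `t > 0`, so `c n` is a combination of `e^{∓2π|n|t}`. Finite Dirichlet energy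
provides arbitrarily large heights at which `c n` and `c n'` are bounded by `1`, which rules out the
growing exponential, and the zero mean makes `c 0 = 0`. Summing the Fourier series of `u(·,t)`
then gives `|u(x,t)| ≤ C e^{-2πt}`.
-/

theorem hasDerivAt_intervalIntegral_of_continuous {E : Type*} [NormedAddCommGroup E]
    [NormedSpace ℝ E] {F F' : ℝ → ℝ → E} {a b : ℝ} (hF : Continuous (Function.uncurry F))
    (hF' : Continuous (Function.uncurry F'))
    (hFF' : ∀ s x, HasDerivAt (fun s => F s x) (F' s x) s) (t : ℝ) :
    HasDerivAt (fun s => ∫ x in a..b, F s x) (∫ x in a..b, F' t x) t := by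
  obtain ⟨C, hC⟩ := ((isCompact_closedBall t 1).prod isCompact_uIcc).exists_bound_of_continuousOn
    (f := Function.uncurry F') (s := Metric.closedBall t 1 ×ˢ uIcc a b) hF'.continuousOn
  have hFs (s : ℝ) : Continuous (F s) := hF.comp (Continuous.prodMk_right s)
  refine (intervalIntegral.hasDerivAt_integral_of_dominated_loc_of_deriv_le
    (bound := fun _ => C) (Metric.ball_mem_nhds t one_pos)
    (.of_forall fun s => (hFs s).aestronglyMeasurable) ((hFs t).intervalIntegrable a b)
    (hF'.comp (Continuous.prodMk_right t)).aestronglyMeasurable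
    (.of_forall fun x hx s hs => hC (s, x) ⟨Metric.ball_subset_closedBall hs, uIoc_subset_uIcc hx⟩)
    intervalIntegrable_const (.of_forall fun x _ s _ => hFF' s x)).2

theorem eq_exp_mul_of_hasDerivAt_of_frequently_bounded {c d : ℝ → ℂ} {l B : ℝ} (hl : 0 < l)
    (hc : ∀ t, 0 < t → HasDerivAt c (d t) t)
    (hd : ∀ t, 0 < t → HasDerivAt d ((l : ℂ) ^ 2 * c t) t)
    (hbdd : ∃ᶠ t in atTop, ‖c t‖ ≤ B ∧ ‖d t‖ ≤ B) {s t : ℝ} (hs : 0 < s) (ht : 0 < t) :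
    c t = (exp (-l * (t - s)) : ℂ) * c s := by
  have hexp (a t : ℝ) : HasDerivAt (fun s => (exp (a * s) : ℂ)) (a * exp (a * t)) t := by
    simpa [mul_comm] using ((hasDerivAt_id (t : ℂ)).const_mul (a : ℂ)).cexp.comp_ofReal
  have hconst {f : ℝ → ℂ} (hf : ∀ t, 0 < t → HasDerivAt f 0 t) {s t : ℝ} (hs : 0 < s)
      (ht : 0 < t) : f t = f s :=
    isOpen_Ioi.is_const_of_deriv_eq_zero isPreconnected_Ioi
      (fun x hx => (hf x hx).differentiableAt.differentiableWithinAt)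
      (fun x hx => (hf x hx).deriv) ht hs
  -- `W = e^{-lt} (d + l c)` is constant and small at the times where `c, d` are bounded, so it
  -- vanishes; this kills the growing mode and leaves `c' = -l c`.
  set W : ℝ → ℂ := fun t => exp (-l * t) * (d t + l * c t)
  have hW : ∀ t, 0 < t → HasDerivAt W 0 t := fun t ht => by
    refine ((hexp (-l) t).mul ((hd t ht).add ((hc t ht).const_mul (l : ℂ)))).congr_deriv ?_
    simp only [Pi.add_apply]; push_cast; ring
  have hW1 : W 1 = 0 := by
    by_contra hne
    have hlim : Tendsto (fun t => exp (-l * t) * (B + l * B)) atTop (𝓝 0) := by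
      simpa using ((tendsto_exp_atBot.comp
        (tendsto_id.const_mul_atTop_of_neg (neg_neg_of_pos hl))).mul_const (B + l * B))
    obtain ⟨t, ⟨hcB, hdB⟩, hsmall, ht⟩ := (hbdd.and_eventually ((hlim.eventually
      (gt_mem_nhds (norm_pos_iff.2 hne))).and (eventually_gt_atTop 0))).exists
    refine (hsmall.trans_le' ?_).false
    rw [← hconst hW one_pos ht]
    simp only [W, norm_mul, Complex.norm_real, norm_of_nonneg (exp_pos _).le]
    gcongr
    calc ‖d t + l * c t‖ ≤ ‖d t‖ + l * ‖c t‖ := by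
          simpa [abs_of_pos hl] using norm_add_le (d t) (l * c t)
      _ ≤ B + l * B := by gcongr
  have hdc : ∀ t, 0 < t → d t = -l * c t := fun t ht => by
    have := (hconst hW one_pos ht).trans hW1
    simpa [W, exp_ne_zero, add_eq_zero_iff_eq_neg] using this
  have hV : ∀ t, 0 < t → HasDerivAt (fun t => (exp (l * t) : ℂ) * c t) 0 t := fun t ht => by
    refine ((hexp l t).mul (hc t ht)).congr_deriv ?_
    rw [hdc t ht]; ring
  have := hconst hV hs ht
  rw [← mul_right_inj' (Complex.ofReal_ne_zero.2 (exp_pos (l * t)).ne'), this, ← mul_assoc,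
    ← Complex.ofReal_mul, ← exp_add]
  ring_nf

theorem frequently_integral_le_of_integrableOn_prod_Ioi {F : ℝ × ℝ → ℝ} {s : Set ℝ} {a ε : ℝ}
    (hF : IntegrableOn F (s ×ˢ Ioi a)) (hε : 0 < ε) :
    ∃ᶠ t in atTop, ∫ x in s, F (x, t) ≤ ε := by
  have hint : IntegrableOn (fun t => ∫ x in s, F (x, t)) (Ioi a) := by
    rw [IntegrableOn, Measure.volume_eq_prod, ← Measure.prod_restrict] at hF
    exact hF.integral_prod_right
  intro hlarge
  obtain ⟨T, hT⟩ := eventually_atTop.1 hlarge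
  have hconst : IntegrableOn (fun _ => ε) (Ioi (max a T)) := by
    refine Integrable.mono' (hint.mono_set (Ioi_subset_Ioi (le_max_left a T)))
      aestronglyMeasurable_const
      ((ae_restrict_iff' measurableSet_Ioi).2 (.of_forall fun t ht => ?_))
    rw [norm_of_nonneg hε.le]
    exact (not_le.1 (hT t (le_max_right a T |>.trans ht.le))).le
  simp [integrableOn_const_iff, hε.ne'] at hconst

theorem summable_exp_mul_abs_int {a : ℝ} (ha : a < 0) :
    Summable fun n : ℤ => exp (a * |(n : ℝ)|) := by
  have h := (summable_exp_nat_mul_iff (a := a)).2 ha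
  refine .of_nat_of_neg ?_ ?_ <;> simpa [mul_comm] using h

theorem norm_fourier_coe (n : ℤ) (x : ℝ) : ‖fourier n (x : AddCircle (1:ℝ))‖ = 1 := by
  rw [fourier_apply, Circle.norm_coe]

theorem continuous_fourier_coe (n : ℤ) : Continuous fun x : ℝ => fourier n (x : AddCircle (1:ℝ)) :=
  (fourier n).continuous.comp (AddCircle.continuous_mk' 1)

theorem norm_le_tsum_of_norm_fourierCoeff_le {f : ℝ → ℂ} (hf : Continuous f)
    (hper : Function.Periodic f 1) {a : ℤ → ℝ} (ha : Summable a)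
    (hfa : ∀ n : ℤ, ‖∫ x in (0:ℝ)..1, fourier (-n) (x : AddCircle (1:ℝ)) * f x‖ ≤ a n) (x : ℝ) :
    ‖f x‖ ≤ ∑' n, a n := by
  have : Fact ((0:ℝ) < 1) := ⟨one_pos⟩
  let F : C(AddCircle (1:ℝ), ℂ) := ⟨hper.lift, hf.quotient_liftOn' _⟩
  have hFf (y : ℝ) : F y = f y := rfl
  have hFa (n : ℤ) : ‖fourierCoeff F n‖ ≤ a n := by
    simpa [fourierCoeff_eq_intervalIntegral _ n 0, hFf] using hfa n
  have hsum : Summable fun n => ‖fourierCoeff F n‖ :=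
    ha.of_nonneg_of_le (fun _ => norm_nonneg _) hFa
  calc ‖f x‖ = ‖∑' n, fourierCoeff F n • fourier n (x : AddCircle (1:ℝ))‖ := by
        rw [(has_pointwise_sum_fourier_series_of_summable hsum.of_norm _).tsum_eq, hFf]
    _ ≤ ∑' n, ‖fourierCoeff F n‖ := by
        refine (norm_tsum_le_tsum_norm ?_).trans_eq ?_ <;>
          simp only [norm_smul, norm_fourier_coe, mul_one]
        exact hsum
    _ ≤ ∑' n, a n := hsum.tsum_le_tsum hFa ha

noncomputable def partialFst (v : ℝ × ℝ → ℝ) (y : ℝ × ℝ) : ℝ := fderiv ℝ v y (1, 0)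

noncomputable def partialSnd (v : ℝ × ℝ → ℝ) (y : ℝ × ℝ) : ℝ := fderiv ℝ v y (0, 1)

section Partials

variable {v : ℝ × ℝ → ℝ}

theorem hasDerivAt_partialFst {x t : ℝ} (hv : DifferentiableAt ℝ v (x, t)) :
    HasDerivAt (fun s => v (s, t)) (partialFst v (x, t)) x :=
  hv.hasFDerivAt.comp_hasDerivAt x ((hasDerivAt_id x).prodMk (hasDerivAt_const x t))

theorem hasDerivAt_partialSnd {x t : ℝ} (hv : DifferentiableAt ℝ v (x, t)) :
    HasDerivAt (fun s => v (x, s)) (partialSnd v (x, t)) t :=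
  hv.hasFDerivAt.comp_hasDerivAt t ((hasDerivAt_const t x).prodMk (hasDerivAt_id t))

theorem ContDiff.partialFst {n : WithTop ℕ∞} (hv : ContDiff ℝ (n + 1) v) :
    ContDiff ℝ n (partialFst v) :=
  (hv.fderiv_right le_rfl).clm_apply contDiff_const

theorem ContDiff.partialSnd {n : WithTop ℕ∞} (hv : ContDiff ℝ (n + 1) v) :
    ContDiff ℝ n (partialSnd v) :=
  (hv.fderiv_right le_rfl).clm_apply contDiff_const

theorem abs_partialFst_le (y : ℝ × ℝ) : |partialFst v y| ≤ ‖fderiv ℝ v y‖ := by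
  simpa [partialFst, Prod.norm_def] using (fderiv ℝ v y).le_opNorm (1, 0)

theorem abs_partialSnd_le (y : ℝ × ℝ) : |partialSnd v y| ≤ ‖fderiv ℝ v y‖ := by
  simpa [partialSnd, Prod.norm_def] using (fderiv ℝ v y).le_opNorm (0, 1)

theorem partialFst_add_one (hper : ∀ x t, v (x + 1, t) = v (x, t)) (x t : ℝ) :
    partialFst v (x + 1, t) = partialFst v (x, t) := by
  have hv : (fun y => v (y + (1, 0))) = v := funext fun ⟨x, t⟩ => by simpa using hper x t
  rw [partialFst, partialFst]
  conv_rhs => rw [← hv, fderiv_comp_add_right, Prod.mk_add_mk, add_zero]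

theorem deriv_deriv_fst (hv : ContDiff ℝ 2 v) (x t : ℝ) :
    deriv (fun r => deriv (fun s => v (s, t)) r) x = partialFst (partialFst v) (x, t) := by
  have hv' : ContDiff ℝ (1 + 1) v := hv
  simp_rw [fun r => (hasDerivAt_partialFst (hv.differentiable two_ne_zero (r, t))).deriv]
  exact (hasDerivAt_partialFst (hv'.partialFst.differentiable one_ne_zero _)).deriv

theorem deriv_deriv_snd (hv : ContDiff ℝ 2 v) (x t : ℝ) :
    deriv (fun r => deriv (fun s => v (x, s)) r) t = partialSnd (partialSnd v) (x, t) := by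
  have hv' : ContDiff ℝ (1 + 1) v := hv
  simp_rw [fun r => (hasDerivAt_partialSnd (hv.differentiable two_ne_zero (x, r))).deriv]
  exact (hasDerivAt_partialSnd (hv'.partialSnd.differentiable one_ne_zero _)).deriv

end Partials

noncomputable def sliceCoeff (v : ℝ × ℝ → ℝ) (n : ℤ) (t : ℝ) : ℂ :=
  ∫ x in (0:ℝ)..1, fourier (-n) (x : AddCircle (1:ℝ)) * v (x, t)

section SliceCoeff

variable {v : ℝ × ℝ → ℝ}

theorem norm_sliceCoeff_le (n : ℤ) (t : ℝ) : ‖sliceCoeff v n t‖ ≤ ∫ x in (0:ℝ)..1, |v (x, t)| :=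
  (intervalIntegral.norm_integral_le_integral_norm zero_le_one).trans_eq <| by
    simp only [norm_mul, norm_fourier_coe, one_mul, Complex.norm_real, Real.norm_eq_abs]

theorem sliceCoeff_zero (t : ℝ) : sliceCoeff v 0 t = ∫ x in (0:ℝ)..1, v (x, t) := by
  simp [sliceCoeff, intervalIntegral.integral_ofReal]

theorem hasDerivAt_sliceCoeff (hv : ContDiff ℝ 1 v) (n : ℤ) (t : ℝ) :
    HasDerivAt (sliceCoeff v n) (sliceCoeff (partialSnd v) n t) t := by
  have hv' : ContDiff ℝ (0 + 1) v := hv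
  have hcont {w : ℝ × ℝ → ℝ} (hw : Continuous w) : Continuous (Function.uncurry fun s x : ℝ =>
      fourier (-n) (x : AddCircle (1:ℝ)) * (w (x, s) : ℂ)) :=
    ((continuous_fourier_coe _).comp continuous_snd).mul
      (Complex.continuous_ofReal.comp (hw.comp continuous_swap))
  exact hasDerivAt_intervalIntegral_of_continuous (hcont hv.continuous)
    (hcont hv'.partialSnd.continuous) (fun s x =>
      ((hasDerivAt_partialSnd (hv.differentiable one_ne_zero _)).ofReal_comp).const_mul _) t

theorem sliceCoeff_partialFst (hv : ContDiff ℝ 1 v) (hper : ∀ x t, v (x + 1, t) = v (x, t))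
    (n : ℤ) (t : ℝ) :
    sliceCoeff (partialFst v) n t = 2 * π * Complex.I * n * sliceCoeff v n t := by
  have hv' : ContDiff ℝ (0 + 1) v := hv
  have hparts := intervalIntegral.integral_mul_deriv_eq_deriv_mul
    (fun x _ => hasDerivAt_fourier_neg 1 n x)
    (fun x _ => (hasDerivAt_partialFst (hv.differentiable one_ne_zero (x, t))).ofReal_comp)
    (((continuous_fourier_coe _).const_mul _).intervalIntegrable 0 1)
    ((Complex.continuous_ofReal.comp
      (hv'.partialFst.continuous.comp (Continuous.prodMk_left t))).intervalIntegrable 0 1)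
  have hboundary : fourier (-n) ((1:ℝ) : AddCircle (1:ℝ)) * v (1, t) =
      fourier (-n) ((0:ℝ) : AddCircle (1:ℝ)) * v (0, t) := by
    rw [AddCircle.coe_period, AddCircle.coe_zero, ← zero_add (1:ℝ), hper]
  rw [sliceCoeff, hparts, hboundary, sub_self, zero_sub, sliceCoeff,
    ← intervalIntegral.integral_const_mul, ← intervalIntegral.integral_neg]
  congr 1 with x
  push_cast
  ring

end SliceCoeff

theorem integral_le_of_integral_sq_le_one {g : ℝ → ℝ} (hg : Continuous g)
    (h : ∫ x in (0:ℝ)..1, g x ^ 2 ≤ 1) : ∫ x in (0:ℝ)..1, g x ≤ 1 := by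
  have hamgm : ∫ x in (0:ℝ)..1, g x ≤ ∫ x in (0:ℝ)..1, (1 + g x ^ 2) / 2 :=
    intervalIntegral.integral_mono_on zero_le_one (hg.intervalIntegrable 0 1)
      (((continuous_const.add (hg.pow 2)).div_const 2).intervalIntegrable 0 1)
      fun x _ => by nlinarith [sq_nonneg (g x - 1)]
  have hg2 : IntervalIntegrable (fun x => g x ^ 2) volume 0 1 := (hg.pow 2).intervalIntegrable 0 1
  rw [intervalIntegral.integral_div, intervalIntegral.integral_add intervalIntegrable_const hg2,
    intervalIntegral.integral_const] at hamgm
  norm_num at hamgm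
  linarith

section Harmonic

variable {u : ℝ × ℝ → ℝ}

theorem frequently_integral_norm_fderiv_le_one (hu : ContDiff ℝ 1 u)
    (hgrad : IntegrableOn (fun y => ‖fderiv ℝ u y‖ ^ 2) (Ioo (0:ℝ) 1 ×ˢ Ioi (0:ℝ))) :
    ∃ᶠ t in atTop, ∫ x in (0:ℝ)..1, ‖fderiv ℝ u (x, t)‖ ≤ 1 := by
  refine (frequently_integral_le_of_integrableOn_prod_Ioi hgrad one_pos).mono fun t ht => ?_
  refine integral_le_of_integral_sq_le_one
    ((hu.continuous_fderiv one_ne_zero).comp (Continuous.prodMk_left t)).norm ?_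
  rwa [intervalIntegral.integral_of_le zero_le_one, integral_Ioc_eq_integral_Ioo]

theorem sliceCoeff_partialSnd_partialSnd_of_harmonic (hu : ContDiff ℝ 2 u)
    (hper : ∀ x t, u (x + 1, t) = u (x, t))
    (hharm : ∀ y : ℝ × ℝ, 0 < y.2 →
      deriv (fun t => deriv (fun s => u (s, y.2)) t) y.1
        + deriv (fun t => deriv (fun s => u (y.1, s)) t) y.2 = 0)
    (n : ℤ) {t : ℝ} (ht : 0 < t) :
    sliceCoeff (partialSnd (partialSnd u)) n t
      = ((2 * π * |(n:ℝ)| : ℝ) : ℂ) ^ 2 * sliceCoeff u n t := by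
  have hu' : ContDiff ℝ (1 + 1) u := hu
  have hlap (x : ℝ) : partialSnd (partialSnd u) (x, t) = -partialFst (partialFst u) (x, t) := by
    have := hharm (x, t) ht
    rw [deriv_deriv_fst hu, deriv_deriv_snd hu] at this
    linarith
  have hneg : sliceCoeff (partialSnd (partialSnd u)) n t
      = -sliceCoeff (partialFst (partialFst u)) n t := by
    simp only [sliceCoeff, hlap, ← intervalIntegral.integral_neg]
    push_cast
    ring_nf
  rw [hneg, sliceCoeff_partialFst hu'.partialFst (partialFst_add_one hper),
    sliceCoeff_partialFst (hu.of_le one_le_two) hper]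
  have hsq : ((2 * π * |(n:ℝ)| : ℝ) : ℂ) ^ 2 = -(2 * π * Complex.I * n) ^ 2 := by
    rw [← Complex.ofReal_pow, mul_pow, sq_abs]
    push_cast
    linear_combination (2 * π * n : ℂ) ^ 2 * Complex.I_sq
  rw [hsq]
  ring

theorem sliceCoeff_eq_exp_mul (hu : ContDiff ℝ 2 u) (hper : ∀ x t, u (x + 1, t) = u (x, t))
    (hgrad : IntegrableOn (fun y => ‖fderiv ℝ u y‖ ^ 2) (Ioo (0:ℝ) 1 ×ˢ Ioi (0:ℝ)))
    (hharm : ∀ y : ℝ × ℝ, 0 < y.2 →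
      deriv (fun t => deriv (fun s => u (s, y.2)) t) y.1
        + deriv (fun t => deriv (fun s => u (y.1, s)) t) y.2 = 0)
    {n : ℤ} (hn : n ≠ 0) {s t : ℝ} (hs : 0 < s) (ht : 0 < t) :
    sliceCoeff u n t = (exp (-(2 * π * |(n:ℝ)|) * (t - s)) : ℂ) * sliceCoeff u n s := by
  have hu' : ContDiff ℝ (1 + 1) u := hu
  have hu1 : ContDiff ℝ 1 u := hu.of_le one_le_two
  have hn1 : 1 ≤ |(n:ℝ)| := by exact_mod_cast Int.one_le_abs hn
  have hl : 1 ≤ 2 * π * |(n:ℝ)| := by nlinarith [pi_gt_three]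
  have hint (v : ℝ × ℝ → ℝ) (hv : Continuous v) (hvu : ∀ y, |v y| ≤ ‖fderiv ℝ u y‖) (t : ℝ) :
      ∫ x in (0:ℝ)..1, |v (x, t)| ≤ ∫ x in (0:ℝ)..1, ‖fderiv ℝ u (x, t)‖ :=
    intervalIntegral.integral_mono_on zero_le_one
      ((hv.comp (Continuous.prodMk_left t)).abs.intervalIntegrable 0 1)
      (((hu.continuous_fderiv two_ne_zero).comp (Continuous.prodMk_left t)).norm.intervalIntegrable
        0 1)
      fun x _ => hvu (x, t)
  refine eq_exp_mul_of_hasDerivAt_of_frequently_bounded (B := 1) (by linarith)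
    (fun t _ => hasDerivAt_sliceCoeff hu1 n t) (fun t ht => ?_) ?_ hs ht
  · rw [← sliceCoeff_partialSnd_partialSnd_of_harmonic hu hper hharm n ht]
    exact hasDerivAt_sliceCoeff hu'.partialSnd n t
  refine (frequently_integral_norm_fderiv_le_one hu1 hgrad).mono fun t ht => ⟨?_, ?_⟩
  · calc ‖sliceCoeff u n t‖ ≤ 2 * π * |(n:ℝ)| * ‖sliceCoeff u n t‖ :=
          le_mul_of_one_le_left (norm_nonneg _) hl
      _ = ‖sliceCoeff (partialFst u) n t‖ := by
          rw [sliceCoeff_partialFst hu1 hper, norm_mul]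
          simp [abs_of_pos pi_pos]
      _ ≤ 1 := (norm_sliceCoeff_le n t).trans
          ((hint _ hu'.partialFst.continuous abs_partialFst_le t).trans ht)
  · exact (norm_sliceCoeff_le n t).trans
      ((hint _ hu'.partialSnd.continuous abs_partialSnd_le t).trans ht)

theorem norm_sliceCoeff_le_exp (hu : ContDiff ℝ 2 u)
    (hper : ∀ x t, u (x + 1, t) = u (x, t))
    (hmean : ∀ t : ℝ, 0 ≤ t → (∫ x in (0:ℝ)..1, u (x, t)) = 0)
    (hgrad : IntegrableOn (fun y => ‖fderiv ℝ u y‖ ^ 2) (Ioo (0:ℝ) 1 ×ˢ Ioi (0:ℝ)))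
    (hharm : ∀ y : ℝ × ℝ, 0 < y.2 →
      deriv (fun t => deriv (fun s => u (s, y.2)) t) y.1
        + deriv (fun t => deriv (fun s => u (y.1, s)) t) y.2 = 0)
    (n : ℤ) {t : ℝ} (ht : 1 ≤ t) :
    ‖sliceCoeff u n t‖ ≤ (∫ x in (0:ℝ)..1, |u (x, 1 / 2)|) * exp (2 * π) * exp (-2 * π * t)
      * exp (-π * |(n:ℝ)|) := by
  have hM : 0 ≤ ∫ x in (0:ℝ)..1, |u (x, 1 / 2)| :=
    intervalIntegral.integral_nonneg zero_le_one fun x _ => abs_nonneg _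
  rcases eq_or_ne n 0 with rfl | hn
  · rw [sliceCoeff_zero, hmean t (by linarith), Complex.ofReal_zero, norm_zero]
    positivity
  have hn1 : 1 ≤ |(n:ℝ)| := by exact_mod_cast Int.one_le_abs hn
  calc ‖sliceCoeff u n t‖
      = exp (-(2 * π * |(n:ℝ)|) * (t - 1 / 2)) * ‖sliceCoeff u n (1 / 2)‖ := by
        rw [sliceCoeff_eq_exp_mul hu hper hgrad hharm hn (s := 1 / 2) (by norm_num) (by linarith),
          norm_mul, Complex.norm_real, norm_of_nonneg (exp_pos _).le]
    _ ≤ exp (2 * π + -2 * π * t + -π * |(n:ℝ)|) * ∫ x in (0:ℝ)..1, |u (x, 1 / 2)| := by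
        gcongr
        · -- `(|n| - 1) (t - 1) ≥ 0`
          nlinarith [mul_nonneg (sub_nonneg.2 hn1) (sub_nonneg.2 ht), pi_pos]
        · exact norm_sliceCoeff_le n _
    _ = _ := by rw [exp_add, exp_add]; ring

end Harmonic

theorem stmt12 (u : ℝ × ℝ → ℝ) (hu : ContDiff ℝ 2 u)
    (hper : ∀ y₁ y₂ : ℝ, u (y₁ + 1, y₂) = u (y₁, y₂))
    (hmean : ∀ y₂ : ℝ, 0 ≤ y₂ → (∫ y₁ in (0:ℝ)..1, u (y₁, y₂)) = 0)
    (hgrad : IntegrableOn (fun y => ‖fderiv ℝ u y‖^2) ((Ioo (0:ℝ) 1) ×ˢ (Ioi (0:ℝ))))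
    (hharm : ∀ y : ℝ × ℝ, 0 < y.2 →
      deriv (fun t => deriv (fun s => u (s, y.2)) t) y.1
        + deriv (fun t => deriv (fun s => u (y.1, s)) t) y.2 = 0) :
    ∃ C : ℝ, ∀ y₁ y₂ : ℝ, 1 ≤ y₂ →
      |u (y₁, y₂)| ≤ C * Real.exp (-2 * π * y₂) := by
  set M := ∫ x in (0:ℝ)..1, |u (x, 1 / 2)|
  refine ⟨M * exp (2 * π) * ∑' n : ℤ, exp (-π * |(n:ℝ)|), fun y₁ t ht => ?_⟩
  have hsum := (summable_exp_mul_abs_int (neg_lt_zero.2 pi_pos)).mul_left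
    (M * exp (2 * π) * exp (-2 * π * t))
  have hbound := norm_le_tsum_of_norm_fourierCoeff_le (f := fun x => (u (x, t) : ℂ))
    (Complex.continuous_ofReal.comp (hu.continuous.comp (Continuous.prodMk_left t)))
    (fun x => by simp only [hper]) hsum (norm_sliceCoeff_le_exp hu hper hmean hgrad hharm · ht) y₁
  rw [tsum_mul_left, Complex.norm_real, norm_eq_abs] at hbound
  linarith
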